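/- Fix a positive integer n, reals 0 < p < q < 1, and k ∈ {0,1,…,n}. If X_p ~ Bin(n,p) and X_q ~ Bin(n,q), then E[X_p | X_p ≥ k] ≤ E[X_q | X_q ≥ k]. -/

import Mathlib

/-- The binomial probability mass function: `P[Bin(n,p) = k]`. -/
noncomputable def binomialPMF (n : ℕ) (p : ℝ) (k : ℕ) : ℝ :=
  (n.choose k : ℝ) * p ^ k * (1 - p) ^ (n - k)

/-- The tail conditional expectation `E[Bin(n,p) | Bin(n,p) ≥ k]`. -/
noncomputable def binomialTCE (n : ℕ) (p : ℝ) (k : ℕ) : ℝ :=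
  (∑ j ∈ Finset.Icc k n, (j : ℝ) * binomialPMF n p j) /
    (∑ j ∈ Finset.Icc k n, binomialPMF n p j)

/-!
Conditioned on `X ≥ k`, the laws of `Bin(n,p)` and `Bin(n,q)` are compared by their likelihood
ratio `P[X_q = j] / P[X_p = j] ∝ (q(1-p) / (p(1-q)))^j`, which increases in `j` when `p < q`.
A monotone likelihood ratio implies that every increasing function, in particular the identity,
has a larger mean under the second law: this is a weighted Chebyshev sum inequality, proved by
expanding a double sum of nonnegative terms.
-/

open Finset

section LikelihoodRatio

variable {ι : Type*} (s : Finset ι) (f a b : ι → ℝ)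

theorem Finset.sum_sum_sub_mul_cross_sub_eq :
    ∑ i ∈ s, ∑ j ∈ s, (f i - f j) * (b i * a j - a i * b j) =
      2 * ((∑ i ∈ s, f i * b i) * ∑ i ∈ s, a i - (∑ i ∈ s, f i * a i) * ∑ i ∈ s, b i) := by
  have swap : ∑ i ∈ s, ∑ j ∈ s, f j * (b i * a j - a i * b j) =
      -∑ i ∈ s, ∑ j ∈ s, f i * (b i * a j - a i * b j) := by
    rw [sum_comm, ← sum_neg_distrib]
    refine sum_congr rfl fun i _ => ?_
    rw [← sum_neg_distrib]
    exact sum_congr rfl fun j _ => by ring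
  simp only [sub_mul, sum_sub_distrib, swap]
  simp only [mul_sub, sum_sub_distrib, sum_mul_sum, mul_assoc]
  ring

variable {s f a b} [LinearOrder ι]

theorem Finset.sum_mul_sum_le_of_monotoneOn_of_cross_le (hf : MonotoneOn f s)
    (hab : ∀ i ∈ s, ∀ j ∈ s, i ≤ j → a j * b i ≤ a i * b j) :
    (∑ i ∈ s, f i * a i) * ∑ i ∈ s, b i ≤ (∑ i ∈ s, f i * b i) * ∑ i ∈ s, a i := by
  have hterm : ∀ i ∈ s, ∀ j ∈ s, 0 ≤ (f i - f j) * (b i * a j - a i * b j) := by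
    intro i hi j hj
    rcases le_total i j with hij | hji
    · exact mul_nonneg_of_nonpos_of_nonpos (sub_nonpos.2 (hf hi hj hij))
        (by linarith [hab i hi j hj hij])
    · exact mul_nonneg (sub_nonneg.2 (hf hj hi hji)) (by linarith [hab j hj i hi hji])
  have := sum_nonneg fun i hi => sum_nonneg fun j hj => hterm i hi j hj
  rw [sum_sum_sub_mul_cross_sub_eq] at this
  linarith

theorem Finset.div_sum_le_div_sum_of_monotoneOn_of_cross_le (hf : MonotoneOn f s)
    (hab : ∀ i ∈ s, ∀ j ∈ s, i ≤ j → a j * b i ≤ a i * b j)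
    (ha : 0 < ∑ i ∈ s, a i) (hb : 0 < ∑ i ∈ s, b i) :
    (∑ i ∈ s, f i * a i) / ∑ i ∈ s, a i ≤ (∑ i ∈ s, f i * b i) / ∑ i ∈ s, b i := by
  rw [div_le_div_iff₀ ha hb]
  exact sum_mul_sum_le_of_monotoneOn_of_cross_le hf hab

end LikelihoodRatio

theorem binomialPMF_pos {n j : ℕ} {p : ℝ} (hp : 0 < p) (hp1 : p < 1) (hjn : j ≤ n) :
    0 < binomialPMF n p j := by
  have hchoose : (0 : ℝ) < n.choose j := by exact_mod_cast Nat.choose_pos hjn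
  have h1p : 0 < 1 - p := by linarith
  unfold binomialPMF
  positivity

theorem binomialPMF_eq_zero_of_lt {n j : ℕ} (p : ℝ) (hnj : n < j) : binomialPMF n p j = 0 := by
  simp [binomialPMF, Nat.choose_eq_zero_of_lt hnj]

theorem binomialPMF_mul_le_mul {n i j : ℕ} {p q : ℝ} (hp : 0 ≤ p) (hpq : p ≤ q) (hq : q ≤ 1)
    (hij : i ≤ j) :
    binomialPMF n p j * binomialPMF n q i ≤ binomialPMF n p i * binomialPMF n q j := by
  rcases lt_or_ge n j with hnj | hjn
  · simp [binomialPMF_eq_zero_of_lt _ hnj]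
  obtain ⟨d, rfl⟩ := Nat.exists_eq_add_of_le hij
  have hni : n - i = (n - (i + d)) + d := by omega
  have hratio : (p * (1 - q)) ^ d ≤ (q * (1 - p)) ^ d :=
    pow_le_pow_left₀ (mul_nonneg hp (by linarith)) (by nlinarith) d
  have hcommon : 0 ≤ (n.choose (i + d) : ℝ) * n.choose i *
      (p ^ i * q ^ i * (1 - p) ^ (n - (i + d)) * (1 - q) ^ (n - (i + d))) := by
    have : 0 ≤ 1 - p := by linarith
    have : 0 ≤ 1 - q := by linarith
    have : 0 ≤ q := by linarith
    positivity
  unfold binomialPMF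
  calc (n.choose (i + d) : ℝ) * p ^ (i + d) * (1 - p) ^ (n - (i + d)) *
        (n.choose i * q ^ i * (1 - q) ^ (n - i))
      = (n.choose (i + d) : ℝ) * n.choose i *
          (p ^ i * q ^ i * (1 - p) ^ (n - (i + d)) * (1 - q) ^ (n - (i + d))) *
          (p * (1 - q)) ^ d := by
        rw [hni, mul_pow]; ring
    _ ≤ (n.choose (i + d) : ℝ) * n.choose i *
          (p ^ i * q ^ i * (1 - p) ^ (n - (i + d)) * (1 - q) ^ (n - (i + d))) *
          (q * (1 - p)) ^ d := mul_le_mul_of_nonneg_left hratio hcommon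
    _ = n.choose i * p ^ i * (1 - p) ^ (n - i) *
          (n.choose (i + d) * q ^ (i + d) * (1 - q) ^ (n - (i + d))) := by
        rw [hni, mul_pow]; ring

theorem sum_Icc_binomialPMF_pos {n k : ℕ} {p : ℝ} (hp : 0 < p) (hp1 : p < 1) (hk : k ≤ n) :
    0 < ∑ j ∈ Icc k n, binomialPMF n p j :=
  sum_pos (fun _ hj => binomialPMF_pos hp hp1 (mem_Icc.1 hj).2) ⟨k, mem_Icc.2 ⟨le_rfl, hk⟩⟩

theorem binomial_tail_cond_exp_monotone_general
    (n : ℕ) (p q : ℝ) (hp : 0 < p) (hpq : p < q) (hq : q < 1)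
    (k : ℕ) (hk : k ≤ n) :
    binomialTCE n p k ≤ binomialTCE n q k :=
  div_sum_le_div_sum_of_monotoneOn_of_cross_le (Nat.mono_cast.monotoneOn _)
    (fun _ _ _ _ hij => binomialPMF_mul_le_mul hp.le hpq.le hq.le hij)
    (sum_Icc_binomialPMF_pos hp (hpq.trans hq) hk)
    (sum_Icc_binomialPMF_pos (hp.trans hpq) hq hk)

theorem binomial_tail_cond_exp_monotone
    (n : ℕ) (hn : 0 < n) (p q : ℝ) (hp : 0 < p) (hpq : p < q) (hq : q < 1)
    (k : ℕ) (hk : k ≤ n) :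
    binomialTCE n p k ≤ binomialTCE n q k :=
  binomial_tail_cond_exp_monotone_general n p q hp hpq hq k hk
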